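/- Let d ≥ 2, let A be a matrix of real-valued Borel functions on ℝ^d such that A(x) is symmetric positive semidefinite for every x, let G : ℝ^d → ℝ^d be Borel, and assume condition (H-2) with constants K > 0 and N₀ ∈ ℕ, N₀ ≥ 1. Define V : ℝ^d → ℝ by V(y) = ln(1 + ‖y‖²). Then V is smooth, lim_{‖y‖→∞} V(y) = ∞, and LV(y) = (1/2)trace(A(y)∇²V(y)) + ⟨G(y), ∇V(y)⟩ satisfies LV(y) ≤ K(d+4)·V(y) + K(d+4)/N₀² for Lebesgue-a.e. y with ‖y‖ > N₀. -/

import Mathlib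

open MeasureTheory Metric Set Filter
open scoped ENNReal RealInnerProductSpace Topology

noncomputable section

/-- `d`-dimensional Euclidean space. -/
abbrev Euc (d : ℕ) := EuclideanSpace ℝ (Fin d)

/-- A smooth compactly supported test function (an element of `C_0^∞(ℝ^d)`). -/
def IsTestFun {d : ℕ} (φ : Euc d → ℝ) : Prop :=
  ContDiff ℝ (⊤ : ℕ∞) φ ∧ HasCompactSupport φ

/-- The second partial derivative `∂_i ∂_j f (x)`. -/
def secondPartial {d : ℕ} (f : Euc d → ℝ) (x : Euc d) (i j : Fin d) : ℝ :=
  iteratedFDeriv ℝ 2 f x ![EuclideanSpace.single i 1, EuclideanSpace.single j 1]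

/-- The operator `L f = (1/2) trace (A ∇²f) + ⟨G, ∇f⟩`. -/
def Lop {d : ℕ} (A : Euc d → Matrix (Fin d) (Fin d) ℝ) (G : Euc d → Euc d)
    (f : Euc d → ℝ) (x : Euc d) : ℝ :=
  (1 / 2) * ∑ i, ∑ j, A x i j * secondPartial f x i j + ⟪G x, gradient f x⟫

/-- The quadratic form `⟨M ξ, ξ⟩` of a matrix. -/
def quadForm {d : ℕ} (M : Matrix (Fin d) (Fin d) ℝ) (ξ : Euc d) : ℝ :=
  ∑ i, (∑ j, M i j * ξ j) * ξ i

/-- The `ℓ²`-operator norm of a matrix. -/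
def opNorm {d : ℕ} (M : Matrix (Fin d) (Fin d) ℝ) : ℝ :=
  ‖Matrix.toEuclideanCLM (𝕜 := ℝ) M‖

/-- Membership in the local Sobolev space `H^{1,p}_loc(ℝ^d)`:
`u` together with some Borel weak partial derivatives `∂_1 u, …, ∂_d u` is
`p`-locally integrable on every open ball, and the integration-by-parts formula
against test functions holds. -/
def MemH1pLoc {d : ℕ} (p : ℝ) (u : Euc d → ℝ) : Prop :=
  ∃ du : Fin d → Euc d → ℝ,
    (∀ k, Measurable (du k)) ∧
    (∀ (z : Euc d) (r : ℝ), 0 < r →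
      (∫⁻ x in ball z r, ENNReal.ofReal (|u x| ^ p)) < ⊤ ∧
      ∀ k, (∫⁻ x in ball z r, ENNReal.ofReal (|du k x| ^ p)) < ⊤) ∧
    (∀ (k : Fin d) (φ : Euc d → ℝ), IsTestFun φ →
      ∫ x, u x * fderiv ℝ φ x (EuclideanSpace.single k 1)
        = - ∫ x, du k x * φ x)

/-- `A` is locally uniformly strictly elliptic on `ℝ^d`. -/
def LocUnifElliptic {d : ℕ} (A : Euc d → Matrix (Fin d) (Fin d) ℝ) : Prop :=
  ∀ (z : Euc d) (r : ℝ), 0 < r → ∃ lam Lam : ℝ, 0 < lam ∧ lam ≤ Lam ∧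
    ∀ x ∈ ball z r, ∀ ξ : Euc d,
      lam * ‖ξ‖ ^ 2 ≤ quadForm (A x) ξ ∧ quadForm (A x) ξ ≤ Lam * ‖ξ‖ ^ 2

/-- Condition (H-1) with integrability exponent `p`. -/
def CondH1 {d : ℕ} (A : Euc d → Matrix (Fin d) (Fin d) ℝ) (G : Euc d → Euc d)
    (p : ℝ) : Prop :=
  2 ≤ d ∧ (d : ℝ) < p ∧ Measurable G ∧
    (∀ i j, Measurable fun x => A x i j) ∧
    (∀ x, (A x).IsSymm) ∧
    (∀ (z : Euc d) (r : ℝ), 0 < r →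
      (∫⁻ x in ball z r, ENNReal.ofReal (‖G x‖ ^ p)) < ⊤) ∧
    (∀ i j, Continuous (fun x => A x i j) ∧ MemH1pLoc p (fun x => A x i j)) ∧
    LocUnifElliptic A

/-- Condition (H-2) with explicit constants `K` and `N₀`. -/
def CondH2With {d : ℕ} (A : Euc d → Matrix (Fin d) (Fin d) ℝ) (G : Euc d → Euc d)
    (K : ℝ) (N₀ : ℕ) : Prop :=
  (∀ x : Euc d, opNorm (A x) ≤ K + K * ‖x‖ ^ 2 * Real.log (1 + ‖x‖ ^ 2)) ∧
  (∀ᵐ x : Euc d ∂volume, (N₀ : ℝ) < ‖x‖ →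
    ⟪G x, x⟫ ≤ K + K * ‖x‖ ^ 2 * Real.log (1 + ‖x‖ ^ 2))

/-- Condition (H-2). -/
def CondH2 {d : ℕ} (A : Euc d → Matrix (Fin d) (Fin d) ℝ) (G : Euc d → Euc d) : Prop :=
  ∃ K : ℝ, 0 < K ∧ ∃ N₀ : ℕ, CondH2With A G K N₀

/-- `(μ_t)_{t ∈ S}` is a solution to the Cauchy problem for the Fokker–Planck
equation associated with `L = Lop A G` and initial distribution `δ_x`, where
`S` is the time interval (`[0,T]` or `[0,∞)`). -/
structure IsFPKSolution {d : ℕ} (A : Euc d → Matrix (Fin d) (Fin d) ℝ)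
    (G : Euc d → Euc d) (x : Euc d) (S : Set ℝ) (μ : ℝ → Measure (Euc d)) : Prop where
  /-- each `μ_t` is a Borel probability measure -/
  prob : ∀ t ∈ S, IsProbabilityMeasure (μ t)
  /-- `μ_0 = δ_x` -/
  init : μ 0 = Measure.dirac x
  /-- for bounded continuous `f`, `t ↦ ∫ f dμ_t` is continuous on `S` -/
  cont : ∀ f : Euc d → ℝ, Continuous f → (∃ C : ℝ, ∀ y, |f y| ≤ C) →
    ContinuousOn (fun t => ∫ y, f y ∂(μ t)) S
  /-- `∫_0^t ∫_B ‖G‖ dμ_s ds < ∞` for every open ball `B` -/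
  Gint : ∀ (z : Euc d) (r : ℝ), 0 < r → ∀ t ∈ S,
    (∫⁻ s in Ioc (0 : ℝ) t, ∫⁻ y in ball z r, ENNReal.ofReal ‖G y‖ ∂(μ s)) < ⊤
  /-- the Fokker–Planck identity -/
  fpk : ∀ t ∈ S, ∀ φ : Euc d → ℝ, IsTestFun φ →
    ∫ y, φ y ∂(μ t) = φ x + ∫ s in Ioc (0 : ℝ) t, ∫ y, Lop A G φ y ∂(μ s)


def innerCLM (d : ℕ) : Euc d →L[ℝ] Euc d →L[ℝ] ℝ :=
  (isBoundedBilinearMap_inner (𝕜 := ℝ)).toContinuousLinearMap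

@[simp] lemma innerCLM_apply {d : ℕ} (x v : Euc d) : innerCLM d x v = ⟪x, v⟫ := rfl

lemma lyap_q_pos {d : ℕ} (y : Euc d) : (0:ℝ) < 1 + ‖y‖^2 := by positivity

lemma lyap_hq_fd {d : ℕ} (y : Euc d) :
    HasFDerivAt (fun y : Euc d => 1 + ‖y‖^2) ((2:ℝ) • innerCLM d y) y := by
  have h := (hasStrictFDerivAt_norm_sq y).hasFDerivAt.const_add (1:ℝ)
  refine h.congr_fderiv ?_
  ext v
  simp [innerCLM_apply]

lemma lyap_hV_fd {d : ℕ} (y : Euc d) :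
    HasFDerivAt (fun y : Euc d => Real.log (1 + ‖y‖^2))
      ((2 / (1 + ‖y‖^2)) • innerCLM d y) y := by
  have hl : HasDerivAt Real.log (1 + ‖y‖^2)⁻¹ (1 + ‖y‖^2) :=
    Real.hasDerivAt_log (lyap_q_pos y).ne'
  have := hl.comp_hasFDerivAt y (lyap_hq_fd y)
  refine this.congr_fderiv ?_
  rw [smul_smul]
  congr 1
  field_simp

lemma lyap_grad_V {d : ℕ} (y : Euc d) :
    gradient (fun y : Euc d => Real.log (1 + ‖y‖^2)) y
      = (2 / (1 + ‖y‖^2)) • y := by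
  refine HasGradientAt.gradient ?_
  rw [hasGradientAt_iff_hasFDerivAt]
  refine (lyap_hV_fd y).congr_fderiv ?_
  ext v
  simp [InnerProductSpace.toDual_apply_apply, real_inner_smul_left]

lemma lyap_hc_fd {d : ℕ} (x : Euc d) :
    HasFDerivAt (fun y : Euc d => 2 / (1 + ‖y‖^2))
      ((-4 / (1 + ‖x‖^2)^2) • innerCLM d x) x := by
  have hinv : HasDerivAt (fun t : ℝ => 2 * t⁻¹)
      (2 * (-((1 + ‖x‖^2)^2)⁻¹)) (1 + ‖x‖^2) :=
    (hasDerivAt_inv (lyap_q_pos x).ne').const_mul 2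
  have := hinv.comp_hasFDerivAt x (lyap_hq_fd x)
  refine this.congr_fderiv ?_
  rw [smul_smul]
  congr 1
  ring

lemma lyap_fderiv_V {d : ℕ} :
    (fderiv ℝ (fun y : Euc d => Real.log (1 + ‖y‖^2)))
      = fun y => (2 / (1 + ‖y‖^2)) • innerCLM d y :=
  funext fun y => (lyap_hV_fd y).fderiv

lemma lyap_hF_fd {d : ℕ} (x : Euc d) :
    HasFDerivAt (fun y : Euc d => (2 / (1 + ‖y‖^2)) • innerCLM d y)
      ((2 / (1 + ‖x‖^2)) • (innerCLM d)
        + (((-4 / (1 + ‖x‖^2)^2) • innerCLM d x).smulRight (innerCLM d x))) x :=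
  (lyap_hc_fd x).smul ((innerCLM d).hasFDerivAt)

lemma lyap_secondPartial_V {d : ℕ} (x : Euc d) (u v : Euc d) :
    iteratedFDeriv ℝ 2 (fun y : Euc d => Real.log (1 + ‖y‖^2)) x ![u, v]
      = 2 / (1 + ‖x‖^2) * ⟪u, v⟫
        - 4 / (1 + ‖x‖^2)^2 * (⟪x, u⟫ * ⟪x, v⟫) := by
  rw [iteratedFDeriv_two_apply]
  rw [lyap_fderiv_V, (lyap_hF_fd x).fderiv]
  simp [ContinuousLinearMap.smul_apply, ContinuousLinearMap.add_apply,
    ContinuousLinearMap.smulRight_apply, innerCLM_apply]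
  ring

lemma lyap_diag_le_opNorm {d : ℕ} (M : Matrix (Fin d) (Fin d) ℝ) (i : Fin d) :
    M i i ≤ opNorm M := by
  set e : Euc d := EuclideanSpace.single i 1 with he
  have hne : ‖e‖ = 1 := by simp [he]
  have h1 : M i i = ⟪(Matrix.toEuclideanCLM (𝕜 := ℝ) M) e, e⟫ := by
    rw [EuclideanSpace.inner_single_right, he,
      show (EuclideanSpace.single i (1:ℝ))
        = WithLp.toLp 2 (Pi.single i 1) from rfl,
      Matrix.toEuclideanCLM_toLp]
    simp [Matrix.mulVec_single]
  calc M i i = ⟪(Matrix.toEuclideanCLM (𝕜 := ℝ) M) e, e⟫ := h1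
    _ ≤ ‖(Matrix.toEuclideanCLM (𝕜 := ℝ) M) e‖ * ‖e‖ := real_inner_le_norm _ _
    _ ≤ (‖Matrix.toEuclideanCLM (𝕜 := ℝ) M‖ * ‖e‖) * ‖e‖ := by
        gcongr
        exact (Matrix.toEuclideanCLM (𝕜 := ℝ) M).le_opNorm e
    _ = opNorm M := by rw [hne, opNorm]; ring

lemma lyap_quad_nonneg {d : ℕ} {M : Matrix (Fin d) (Fin d) ℝ} (h : M.PosSemidef)
    (y : Euc d) : 0 ≤ ∑ i, ∑ j, M i j * (y i * y j) := by
  have h2 := h.dotProduct_mulVec_nonneg (fun i => y i)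
  refine le_trans h2 (le_of_eq ?_)
  rw [dotProduct]
  refine Finset.sum_congr rfl fun i _ => ?_
  rw [Matrix.mulVec, dotProduct, star_trivial, Finset.mul_sum]
  exact Finset.sum_congr rfl fun j _ => by ring
lemma lyap_arith (d : ℕ) {K L P r2 tr S g : ℝ} (hK : 0 < K) (hL0 : 0 ≤ L)
    (hS : 0 ≤ S) (hP1 : 1 ≤ P) (hPq : P < 1 + r2) (hr0 : 0 ≤ r2)
    (htr : tr ≤ (d:ℝ) * (K + K * r2 * L)) (hG : g ≤ K + K * r2 * L) :
    tr / (1 + r2) - 2 * S / (1 + r2)^2 + 2 * g / (1 + r2)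
      ≤ K * ((d:ℝ) + 4) * L + K * ((d:ℝ) + 4) / P := by
  have hP : (0:ℝ) < P := lt_of_lt_of_le one_pos hP1
  have hq : (0:ℝ) < 1 + r2 := by linarith
  have e1 : tr / (1 + r2) - 2 * S / (1 + r2)^2 + 2 * g / (1 + r2)
      = (tr * (1 + r2) - 2 * S + 2 * g * (1 + r2)) / (1 + r2)^2 := by
    field_simp
  have e2 : K * (↑d + 4) * L + K * (↑d + 4) / P
      = (K * (↑d + 4) * L * P + K * (↑d + 4)) / P := by
    field_simp
  rw [e1, e2, div_le_div_iff₀ (by positivity) hP]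
  have hd0 : (0:ℝ) ≤ (d:ℝ) := Nat.cast_nonneg d
  have hr2 : r2 ≤ 1 + r2 := by linarith
  have key1 : (K + K * r2 * L) * P ≤ K * (L * P + 1) * (1 + r2) := by
    nlinarith [mul_le_mul_of_nonneg_left hr2 (by positivity : (0:ℝ) ≤ K * L * P),
      mul_le_mul_of_nonneg_left hPq.le hK.le]
  have key2 : tr * (1 + r2) - 2 * S + 2 * g * (1 + r2)
      ≤ ((d:ℝ) + 2) * ((K + K * r2 * L) * (1 + r2)) := by
    nlinarith [mul_le_mul_of_nonneg_right htr hq.le,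
      mul_le_mul_of_nonneg_right hG hq.le]
  have key3 := mul_le_mul_of_nonneg_left key1 (by positivity : (0:ℝ) ≤ ((d:ℝ) + 2) * (1 + r2))
  have key4 := mul_le_mul_of_nonneg_right key2 hP.le
  have keyKL : (0:ℝ) ≤ K * (L * P + 1) * ((1 + r2) * (1 + r2)) := by positivity
  nlinarith [key3, key4, keyKL]

/-- For `V(y) = ln(1 + ‖y‖²)`, with `A(x)` symmetric positive
semidefinite and condition (H-2) holding with constants `K > 0` and `N₀ ≥ 1`:
`V` is smooth, `V(y) → ∞` as `‖y‖ → ∞`, and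
`LV(y) ≤ K(d+4) V(y) + K(d+4)/N₀²` for Lebesgue-a.e. `y` with `‖y‖ > N₀`. -/
theorem lyapunov_log_estimate {d : ℕ} (hd : 2 ≤ d)
    (A : Euc d → Matrix (Fin d) (Fin d) ℝ)
    (hAm : ∀ i j, Measurable fun x => A x i j)
    (hApsd : ∀ x, (A x).PosSemidef)
    (G : Euc d → Euc d) (hGm : Measurable G)
    (K : ℝ) (hK : 0 < K) (N₀ : ℕ) (hN₀ : 1 ≤ N₀)
    (hH2 : CondH2With A G K N₀)
    (V : Euc d → ℝ) (hV : V = fun y => Real.log (1 + ‖y‖ ^ 2)) :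
    ContDiff ℝ (⊤ : ℕ∞) V ∧
    Tendsto V (comap norm atTop) atTop ∧
    ∀ᵐ y : Euc d ∂volume, (N₀ : ℝ) < ‖y‖ →
      Lop A G V y ≤ K * (d + 4) * V y + K * (d + 4) / (N₀ : ℝ) ^ 2 := by
  subst hV
  have hq : ∀ y : Euc d, (0:ℝ) < 1 + ‖y‖^2 := lyap_q_pos
  refine ⟨?_, ?_, ?_⟩
  · rw [contDiff_iff_contDiffAt]
    intro x
    exact (Real.contDiffAt_log.mpr (hq x).ne').comp x
      ((contDiff_const.add (contDiff_norm_sq ℝ)).contDiffAt)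
  · have h1 : Tendsto (fun t : ℝ => Real.log (1 + t^2)) atTop atTop :=
      Real.tendsto_log_atTop.comp
        (tendsto_atTop_add_const_left atTop 1 (tendsto_pow_atTop two_ne_zero))
    exact h1.comp tendsto_comap
  · filter_upwards [hH2.2] with y hGy hy
    have hG : ⟪G y, y⟫ ≤ K + K * ‖y‖ ^ 2 * Real.log (1 + ‖y‖ ^ 2) := hGy hy
    have hqy := hq y
    have hterm : ∀ i j, secondPartial (fun y : Euc d => Real.log (1 + ‖y‖^2)) y i j
        = 2 / (1 + ‖y‖^2) * (if i = j then 1 else 0)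
          - 4 / (1 + ‖y‖^2)^2 * (y i * y j) := by
      intro i j
      rw [secondPartial, lyap_secondPartial_V]
      rw [EuclideanSpace.inner_single_left, EuclideanSpace.inner_single_right,
        EuclideanSpace.inner_single_right]
      simp [EuclideanSpace.single_apply, eq_comm]
    have hsum : ∑ i, ∑ j, A y i j * secondPartial
          (fun y : Euc d => Real.log (1 + ‖y‖^2)) y i j
        = 2 / (1 + ‖y‖^2) * (∑ i, A y i i)
          - 4 / (1 + ‖y‖^2)^2 * (∑ i, ∑ j, A y i j * (y i * y j)) := by
      have step : ∀ i j, A y i j * secondPartial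
            (fun y : Euc d => Real.log (1 + ‖y‖^2)) y i j
          = 2 / (1 + ‖y‖^2) * (if i = j then A y i j else 0)
            - 4 / (1 + ‖y‖^2)^2 * (A y i j * (y i * y j)) := by
        intro i j
        rw [hterm]
        by_cases h : i = j <;> simp [h] <;> ring
      calc ∑ i, ∑ j, A y i j * secondPartial
            (fun y : Euc d => Real.log (1 + ‖y‖^2)) y i j
          = ∑ i, ∑ j, (2 / (1 + ‖y‖^2) * (if i = j then A y i j else 0)
            - 4 / (1 + ‖y‖^2)^2 * (A y i j * (y i * y j))) :=
            Finset.sum_congr rfl fun i _ => Finset.sum_congr rfl fun j _ => step i j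
        _ = 2 / (1 + ‖y‖^2) * (∑ i, A y i i)
            - 4 / (1 + ‖y‖^2)^2 * (∑ i, ∑ j, A y i j * (y i * y j)) := by
            simp only [Finset.sum_sub_distrib, ← Finset.mul_sum, Finset.sum_ite_eq,
              Finset.mem_univ, if_true]
    have hgrad : ⟪G y, gradient (fun y : Euc d => Real.log (1 + ‖y‖^2)) y⟫
        = 2 / (1 + ‖y‖^2) * ⟪G y, y⟫ := by
      rw [lyap_grad_V, real_inner_smul_right]
    set tr : ℝ := ∑ i, A y i i with htrdef
    set S : ℝ := ∑ i, ∑ j, A y i j * (y i * y j) with hSdef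
    have hLop : Lop A G (fun y : Euc d => Real.log (1 + ‖y‖^2)) y
        = tr / (1 + ‖y‖^2) - 2 * S / (1 + ‖y‖^2)^2
          + 2 * ⟪G y, y⟫ / (1 + ‖y‖^2) := by
      rw [Lop, hsum, hgrad]
      ring
    have htr : tr ≤ (d : ℝ) * (K + K * ‖y‖ ^ 2 * Real.log (1 + ‖y‖ ^ 2)) := by
      calc tr ≤ ∑ _i : Fin d, opNorm (A y) :=
          Finset.sum_le_sum fun i _ => lyap_diag_le_opNorm (A y) i
        _ = (d : ℝ) * opNorm (A y) := by
            rw [Finset.sum_const, Finset.card_univ, Fintype.card_fin, nsmul_eq_mul]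
        _ ≤ (d : ℝ) * (K + K * ‖y‖ ^ 2 * Real.log (1 + ‖y‖ ^ 2)) :=
            mul_le_mul_of_nonneg_left (hH2.1 y) (Nat.cast_nonneg d)
    have hS : 0 ≤ S := lyap_quad_nonneg (hApsd y) y
    have hL0 : 0 ≤ Real.log (1 + ‖y‖ ^ 2) :=
      Real.log_nonneg (by nlinarith [sq_nonneg ‖y‖])
    have hN1 : (1:ℝ) ≤ (N₀ : ℝ) := by exact_mod_cast hN₀
    have hP1 : (1:ℝ) ≤ (N₀ : ℝ)^2 := by nlinarith
    have hPq : (N₀ : ℝ)^2 < 1 + ‖y‖^2 := by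
      nlinarith [hy, norm_nonneg y, hN1]
    rw [hLop]
    exact lyap_arith d hK hL0 hS hP1 hPq (sq_nonneg _) htr hG
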